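/- arXiv:2309.07258 — 3 statements merged into one kernel-verified Lean document; each statement's English description precedes it below -/
import Mathlib

section
/- The map f : ℝ ⊔ ℝ → ℝ which is constantly 0 on the first copy of ℝ and the identity on the second copy is a subduction of diffeological spaces but not a local subduction. -/
open Set Function
open scoped Manifold

/-! ## Diffeological spaces -/

/-- A diffeology on a type `X`.  A plot is a map `(Fin n → ℝ) → X` together with an open
domain `U ⊆ ℝⁿ`; only the values on `U` matter. -/
structure DiffeologyStr (X : Type*) where
  IsPlot : {n : ℕ} → Set (Fin n → ℝ) → ((Fin n → ℝ) → X) → Prop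
  isOpen_of_isPlot : ∀ {n : ℕ} {U : Set (Fin n → ℝ)} {φ : (Fin n → ℝ) → X},
      IsPlot U φ → IsOpen U
  isPlot_const : ∀ {n : ℕ} {U : Set (Fin n → ℝ)}, IsOpen U → ∀ x : X,
      IsPlot U fun _ => x
  isPlot_congr : ∀ {n : ℕ} {U : Set (Fin n → ℝ)} {φ ψ : (Fin n → ℝ) → X},
      Set.EqOn φ ψ U → IsPlot U φ → IsPlot U ψ
  isPlot_comp : ∀ {n m : ℕ} {U : Set (Fin n → ℝ)} {φ : (Fin n → ℝ) → X}
      {V : Set (Fin m → ℝ)} {g : (Fin m → ℝ) → (Fin n → ℝ)},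
      IsPlot U φ → IsOpen V → ContDiffOn ℝ (⊤ : ℕ∞) g V → Set.MapsTo g V U →
      IsPlot V (φ ∘ g)
  isPlot_locality : ∀ {n : ℕ} {U : Set (Fin n → ℝ)} {φ : (Fin n → ℝ) → X}, IsOpen U →
      (∀ u ∈ U, ∃ V, V ⊆ U ∧ IsOpen V ∧ u ∈ V ∧ IsPlot V φ) → IsPlot U φ

namespace DiffeologyStr

variable {X Y : Type*}

/-- A subset is D-open if its preimage under every plot is open. -/
def dOpen (DX : DiffeologyStr X) (S : Set X) : Prop :=
  ∀ {n : ℕ} {U : Set (Fin n → ℝ)} {φ : (Fin n → ℝ) → X},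
    DX.IsPlot U φ → IsOpen (U ∩ φ ⁻¹' S)

/-- The product diffeology. -/
def prod (DX : DiffeologyStr X) (DY : DiffeologyStr Y) : DiffeologyStr (X × Y) where
  IsPlot U φ := DX.IsPlot U (fun u => (φ u).1) ∧ DY.IsPlot U (fun u => (φ u).2)
  isOpen_of_isPlot h := DX.isOpen_of_isPlot h.1
  isPlot_const hU x := ⟨DX.isPlot_const hU x.1, DY.isPlot_const hU x.2⟩
  isPlot_congr h hp :=
    ⟨DX.isPlot_congr (fun u hu => by rw [h hu]) hp.1,
     DY.isPlot_congr (fun u hu => by rw [h hu]) hp.2⟩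
  isPlot_comp h hV hg hmap :=
    ⟨DX.isPlot_comp h.1 hV hg hmap, DY.isPlot_comp h.2 hV hg hmap⟩
  isPlot_locality hU h :=
    ⟨DX.isPlot_locality hU fun u hu => by
        obtain ⟨V, h1, h2, h3, h4⟩ := h u hu; exact ⟨V, h1, h2, h3, h4.1⟩,
     DY.isPlot_locality hU fun u hu => by
        obtain ⟨V, h1, h2, h3, h4⟩ := h u hu; exact ⟨V, h1, h2, h3, h4.2⟩⟩

/-- The subset diffeology. -/
def subset (DX : DiffeologyStr X) (S : Set X) : DiffeologyStr S where
  IsPlot U φ := DX.IsPlot U fun u => (φ u : X)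
  isOpen_of_isPlot h := DX.isOpen_of_isPlot h
  isPlot_const hU x := DX.isPlot_const hU (x : X)
  isPlot_congr h hp := DX.isPlot_congr (fun u hu => congrArg Subtype.val (h hu)) hp
  isPlot_comp h hV hg hmap := DX.isPlot_comp h hV hg hmap
  isPlot_locality hU h := DX.isPlot_locality hU fun u hu => h u hu

end DiffeologyStr

variable {X Y Z : Type*}

/-- Smooth maps of diffeological spaces. -/
def DSmooth (DX : DiffeologyStr X) (DY : DiffeologyStr Y) (f : X → Y) : Prop :=
  ∀ {n : ℕ} {U : Set (Fin n → ℝ)} {φ : (Fin n → ℝ) → X},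
    DX.IsPlot U φ → DY.IsPlot U (f ∘ φ)

/-- Smoothness of a map on a subset (w.r.t. the subset diffeology). -/
def DSmoothOn (DX : DiffeologyStr X) (DY : DiffeologyStr Y) (f : X → Y) (O : Set X) : Prop :=
  ∀ {n : ℕ} {U : Set (Fin n → ℝ)} {φ : (Fin n → ℝ) → X},
    DX.IsPlot U φ → Set.MapsTo φ U O → DY.IsPlot U (f ∘ φ)

/-- Subductions: plots downstairs lift locally. -/
def IsSubduction (DX : DiffeologyStr X) (DY : DiffeologyStr Y) (f : X → Y) : Prop :=
  DSmooth DX DY f ∧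
    ∀ {n : ℕ} {U : Set (Fin n → ℝ)} {φ : (Fin n → ℝ) → Y}, DY.IsPlot U φ → ∀ u ∈ U,
      ∃ V, V ⊆ U ∧ IsOpen V ∧ u ∈ V ∧ ∃ ψ, DX.IsPlot V ψ ∧ Set.EqOn (f ∘ ψ) φ V

/-- Local subductions: plots lift locally through any prescribed point of the fiber. -/
def IsLocalSubduction (DX : DiffeologyStr X) (DY : DiffeologyStr Y) (f : X → Y) : Prop :=
  DSmooth DX DY f ∧
    ∀ {n : ℕ} {U : Set (Fin n → ℝ)} {φ : (Fin n → ℝ) → Y}, DY.IsPlot U φ →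
      ∀ u ∈ U, ∀ x : X, f x = φ u →
      ∃ V, V ⊆ U ∧ IsOpen V ∧ u ∈ V ∧
        ∃ ψ, DX.IsPlot V ψ ∧ ψ u = x ∧ Set.EqOn (f ∘ ψ) φ V

/-- `DY` is the quotient diffeology of `DX` along `π`: plots are exactly the maps that
locally lift to plots of `X`. -/
def IsQuotientDiffeology (DX : DiffeologyStr X) (π : X → Y) (DY : DiffeologyStr Y) : Prop :=
  ∀ {n : ℕ} (U : Set (Fin n → ℝ)) (φ : (Fin n → ℝ) → Y),
    DY.IsPlot U φ ↔ (IsOpen U ∧ ∀ u ∈ U, ∃ V, V ⊆ U ∧ IsOpen V ∧ u ∈ V ∧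
      ∃ ψ, DX.IsPlot V ψ ∧ Set.EqOn (π ∘ ψ) φ V)

/-- A subset is totally disconnected if every plot taking values in it is locally constant. -/
def TotallyDisconnectedIn (DX : DiffeologyStr X) (S : Set X) : Prop :=
  ∀ {n : ℕ} {U : Set (Fin n → ℝ)} {φ : (Fin n → ℝ) → X},
    DX.IsPlot U φ → Set.MapsTo φ U S → ∀ u ∈ U,
      ∃ V, V ⊆ U ∧ IsOpen V ∧ u ∈ V ∧ ∀ v ∈ V, φ v = φ u

/-- `f` is a local diffeomorphism on the D-open set `O`. -/
def IsLocalDiffeoOn (DX : DiffeologyStr X) (f : X → X) (O : Set X) : Prop :=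
  ∀ x ∈ O, ∃ V, V ⊆ O ∧ DX.dOpen V ∧ x ∈ V ∧ DX.dOpen (f '' V) ∧ Set.InjOn f V ∧
    ∃ g : X → X, DSmoothOn DX DX g (f '' V) ∧ ∀ v ∈ V, g (f v) = v

/-- Quasi-étale maps of diffeological spaces: (QE1) a local subduction, (QE2) with totally
disconnected fibers, such that (QE3) every smooth map over the base defined on a D-open set
is a local diffeomorphism. -/
def IsQuasiEtale (DX : DiffeologyStr X) (DY : DiffeologyStr Y) (π : X → Y) : Prop :=
  IsLocalSubduction DX DY π ∧
  (∀ y : Y, TotallyDisconnectedIn DX (π ⁻¹' {y})) ∧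
  ∀ (O : Set X) (f : X → X), DX.dOpen O → DSmoothOn DX DX f O →
    (∀ x ∈ O, π (f x) = π x) → IsLocalDiffeoOn DX f O

/-! ## Manifolds as diffeological spaces -/

/-- `DM` is the manifold diffeology of the manifold `M`: plots are the smooth maps from
open subsets of Euclidean spaces. -/
def IsManifoldDiffeology {E H : Type*} [NormedAddCommGroup E] [NormedSpace ℝ E]
    [TopologicalSpace H] (I : ModelWithCorners ℝ E H) {M : Type*} [TopologicalSpace M]
    [ChartedSpace H M] (DM : DiffeologyStr M) : Prop :=
  ∀ {n : ℕ} (U : Set (Fin n → ℝ)) (φ : (Fin n → ℝ) → M),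
    DM.IsPlot U φ ↔ (IsOpen U ∧ ContMDiffOn 𝓘(ℝ, Fin n → ℝ) I (⊤ : ℕ∞) φ U)

/-- A witness that the diffeological space `(M, DM)` is a smooth (finite-dimensional,
Hausdorff, second countable) manifold with its manifold diffeology. -/
structure ManifoldDiffeologyWitness (M : Type*) (DM : DiffeologyStr M) where
  d : ℕ
  [tM : TopologicalSpace M]
  [cM : ChartedSpace (EuclideanSpace ℝ (Fin d)) M]
  smooth : IsManifold (𝓡 d) (⊤ : ℕ∞) M
  t2 : T2Space M
  sc : SecondCountableTopology M
  isDiffeology : IsManifoldDiffeology (𝓡 d) DM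

/-- The diffeological space `(M, DM)` is a smooth manifold. -/
def IsSmoothManifoldDiffeology {M : Type*} (DM : DiffeologyStr M) : Prop :=
  Nonempty (ManifoldDiffeologyWitness M DM)

/-- A quasi-étale diffeological space: every point lies in the image of a quasi-étale
chart, i.e. a quasi-étale map from a smooth manifold. -/
def IsQuasiEtaleSpace {X : Type*} (DX : DiffeologyStr X) : Prop :=
  ∀ x : X, ∃ (M : Type) (DM : DiffeologyStr M) (π : M → X),
    IsSmoothManifoldDiffeology DM ∧ IsQuasiEtale DM DX π ∧ x ∈ Set.range π

/-! ## Fiber products and cartesian morphisms in QUED -/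

/-- The diffeological fiber product `X ×_Z Y` of `p : X → Z` and `f : Y → Z`. -/
def fiberProductDiffeology (DX : DiffeologyStr X) (DY : DiffeologyStr Y) (p : X → Z)
    (f : Y → Z) : DiffeologyStr {w : X × Y // p w.1 = f w.2} :=
  (DX.prod DY).subset {w | p w.1 = f w.2}

/-- `p : X → Z` is cartesian in the category QUED of quasi-étale diffeological spaces:
for every QUED morphism `f : Y → Z` the diffeological fiber product is again a
quasi-étale diffeological space (so it provides the fiber product in QUED; when it is
empty there is no commutative square over `p` and `f` in QUED). -/
def IsCartesianQUED (DX : DiffeologyStr X) {Z : Type*} (DZ : DiffeologyStr Z) (p : X → Z) : Prop :=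
  ∀ (Y : Type) (DY : DiffeologyStr Y), IsQuasiEtaleSpace DY → ∀ f : Y → Z, DSmooth DY DZ f →
    IsQuasiEtaleSpace (fiberProductDiffeology DX DY p f)

/-- The standard diffeology of `ℝ`. -/
def IsRealDiffeology (D : DiffeologyStr ℝ) : Prop :=
  ∀ {n : ℕ} (U : Set (Fin n → ℝ)) (φ : (Fin n → ℝ) → ℝ),
    D.IsPlot U φ ↔ (IsOpen U ∧ ContDiffOn ℝ (⊤ : ℕ∞) φ U)

/-- The coproduct (sum) diffeology: a map is a plot iff it locally factors through one of
the two summands via a plot. -/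
def IsSumDiffeology {X Y : Type*} (DX : DiffeologyStr X) (DY : DiffeologyStr Y)
    (DS : DiffeologyStr (X ⊕ Y)) : Prop :=
  ∀ {n : ℕ} (U : Set (Fin n → ℝ)) (φ : (Fin n → ℝ) → X ⊕ Y),
    DS.IsPlot U φ ↔ (IsOpen U ∧ ∀ u ∈ U, ∃ V, V ⊆ U ∧ IsOpen V ∧ u ∈ V ∧
      ((∃ ψ, DX.IsPlot V ψ ∧ Set.EqOn φ (Sum.inl ∘ ψ) V) ∨
       (∃ ψ, DY.IsPlot V ψ ∧ Set.EqOn φ (Sum.inr ∘ ψ) V)))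

/-- The map `ℝ ⊔ ℝ → ℝ` which is `0` on the first summand and the
identity on the second is a subduction but not a local subduction. -/
theorem statement2 (DR : DiffeologyStr ℝ) (hDR : IsRealDiffeology DR)
    (DS : DiffeologyStr (ℝ ⊕ ℝ)) (hDS : IsSumDiffeology DR DR DS) :
    IsSubduction DS DR (Sum.elim (fun _ => (0 : ℝ)) id) ∧
      ¬ IsLocalSubduction DS DR (Sum.elim (fun _ => (0 : ℝ)) id) := by
  constructor
  · constructor
    · intro n U φ hφ
      obtain ⟨hU, hloc⟩ := (hDS U φ).1 hφ
      apply DR.isPlot_locality hU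
      intro u hu
      obtain ⟨V, hVU, hVo, huV, hcase⟩ := hloc u hu
      refine ⟨V, hVU, hVo, huV, ?_⟩
      rcases hcase with ⟨ψ, hψ, heq⟩ | ⟨ψ, hψ, heq⟩
      · exact (hDR V _).2 ⟨hVo, (contDiffOn_const (c := (0:ℝ))).congr
          (fun v hv => by simp [Function.comp, heq hv])⟩
      · exact (hDR V _).2 ⟨hVo, ((hDR V ψ).1 hψ).2.congr
          (fun v hv => by simp [Function.comp, heq hv])⟩
    · intro n U φ hφ u hu
      have hU : IsOpen U := DR.isOpen_of_isPlot hφ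
      refine ⟨U, subset_rfl, hU, hu, Sum.inr ∘ φ, ?_, fun v hv => rfl⟩
      exact (hDS U _).2 ⟨hU, fun v hv =>
        ⟨U, subset_rfl, hU, hv, Or.inr ⟨φ, hφ, fun w hw => rfl⟩⟩⟩
  · rintro ⟨-, hlift⟩
    have hφ : DR.IsPlot (Set.univ : Set (Fin 1 → ℝ)) (fun v => v 0) :=
      (hDR _ _).2 ⟨isOpen_univ, ((ContinuousLinearMap.proj (R := ℝ)
        (φ := fun _ : Fin 1 => ℝ) 0).contDiff (n := (⊤ : ℕ∞))).contDiffOn⟩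
    obtain ⟨V, hVU, hVo, huV, ψ, hψ, hψu, heq⟩ :=
      hlift hφ (fun _ => 0) (Set.mem_univ _) (Sum.inl 0) rfl
    obtain ⟨hVo', hloc⟩ := (hDS V ψ).1 hψ
    obtain ⟨W, hWV, hWo, huW, hcase⟩ := hloc _ huV
    rcases hcase with ⟨χ, hχ, heqW⟩ | ⟨χ, hχ, heqW⟩
    · obtain ⟨ε, hε, hball⟩ := Metric.isOpen_iff.1 hWo _ huW
      set p : Fin 1 → ℝ := fun _ => ε/2 with hp
      have hpW : p ∈ W := hball (Metric.mem_ball.2 ((dist_pi_lt_iff hε).2 fun i => by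
        simp only [hp, Real.dist_eq, sub_zero, abs_of_pos (half_pos hε)]
        linarith))
      have h1 : Sum.elim (fun _ => (0 : ℝ)) id (ψ p) = p 0 := heq (hWV hpW)
      have h2 : ψ p = Sum.inl (χ p) := heqW hpW
      rw [h2] at h1
      simp [hp] at h1
      linarith
    · have h := heqW huW
      rw [hψu] at h
      exact Sum.inl_ne_inr h
end

section
/- If G ⇉ M is a Lie groupoid and X = M/G is its set of orbits equipped with the quotient diffeology, then the quotient map π : M → X is a local subduction. -/
open Set Function
open scoped Manifold

variable {X Y Z : Type*}

/-- A diffeological groupoid: a groupoid object in diffeological spaces. -/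
structure DiffGroupoid {G M : Type*} (DG : DiffeologyStr G) (DM : DiffeologyStr M) where
  src : G → M
  tgt : G → M
  unit : M → G
  mul : G → G → G
  inv : G → G
  smooth_src : DSmooth DG DM src
  smooth_tgt : DSmooth DG DM tgt
  smooth_unit : DSmooth DM DG unit
  smooth_inv : DSmooth DG DG inv
  smooth_mul : ∀ {n : ℕ} {U : Set (Fin n → ℝ)} {φ : (Fin n → ℝ) → G × G},
      (DG.prod DG).IsPlot U φ → (∀ u ∈ U, src (φ u).1 = tgt (φ u).2) →
      DG.IsPlot U fun u => mul (φ u).1 (φ u).2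
  src_unit : ∀ x, src (unit x) = x
  tgt_unit : ∀ x, tgt (unit x) = x
  src_mul : ∀ g h, src g = tgt h → src (mul g h) = src h
  tgt_mul : ∀ g h, src g = tgt h → tgt (mul g h) = tgt g
  src_inv : ∀ g, src (inv g) = tgt g
  tgt_inv : ∀ g, tgt (inv g) = src g
  mul_unit : ∀ g, mul g (unit (src g)) = g
  unit_mul : ∀ g, mul (unit (tgt g)) g = g
  mul_inv : ∀ g, mul g (inv g) = unit (tgt g)
  inv_mul : ∀ g, mul (inv g) g = unit (src g)
  mul_assoc : ∀ g h k, src g = tgt h → src h = tgt k →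
      mul (mul g h) k = mul g (mul h k)


theorem exists_local_right_inverse {E F : Type*} [NormedAddCommGroup E] [NormedSpace ℝ E]
    [NormedAddCommGroup F] [NormedSpace ℝ F] [FiniteDimensional ℝ E] [FiniteDimensional ℝ F]
    {f : E → F} {s : Set E} {a : E} (hso : IsOpen s) (ha : a ∈ s)
    (hf : ContDiffOn ℝ (⊤ : ℕ∞) f s) (hsurj : Surjective (fderiv ℝ f a)) :
    ∃ T : Set F, IsOpen T ∧ f a ∈ T ∧ ∃ h : F → E, h (f a) = a ∧
      ∀ y ∈ T, ContDiffAt ℝ (⊤ : ℕ∞) h y ∧ h y ∈ s ∧ f (h y) = y := by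
  classical
  have hone : (1 : WithTop ℕ∞) ≤ ((⊤ : ℕ∞) : WithTop ℕ∞) := by exact_mod_cast le_top
  set f' : E →L[ℝ] F := fderiv ℝ f a with hf'def
  set K := LinearMap.ker (f' : E →ₗ[ℝ] F) with hK
  obtain ⟨q, hq⟩ := Submodule.exists_isCompl K
  set pl : E →ₗ[ℝ] K := K.linearProjOfIsCompl q hq with hpl
  set p : E →L[ℝ] K := LinearMap.toContinuousLinearMap pl with hp
  have hpK : ∀ x : E, ∀ hx : x ∈ K, p x = ⟨x, hx⟩ := by
    intro x hx
    have := Submodule.linearProjOfIsCompl_apply_left hq ⟨x, hx⟩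
    exact this
  have hfK : ∀ x : K, f' (x : E) = 0 := fun x => x.2
  set Φ : E → F × K := fun x => (f x, p x) with hΦ
  set Φ' : E →L[ℝ] F × K := f'.prod p with hΦ'
  have hbij : Function.Bijective Φ' := by
    constructor
    · intro x y hxy
      have h1 : f' x = f' y := congrArg Prod.fst hxy
      have h2 : p x = p y := congrArg Prod.snd hxy
      have hxmem : x - y ∈ K := by
        simp only [hK, LinearMap.mem_ker, map_sub, ContinuousLinearMap.coe_coe, h1, sub_self]
      have := hpK (x - y) hxmem
      have hz : p (x - y) = 0 := by simp [map_sub, h2]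
      rw [this] at hz
      have : x - y = 0 := congrArg Subtype.val hz
      exact sub_eq_zero.mp this
    · intro ⟨y, k⟩
      obtain ⟨v, hv⟩ := hsurj y
      refine ⟨v - (pl v : E) + (k : E), ?_⟩
      have h1 : f' (v - (pl v : E) + (k : E)) = y := by
        simp [map_sub, map_add, hv, hfK (pl v), hfK k]
      have h2 : p (v - (pl v : E) + (k : E)) = k := by
        have e1 : p v = pl v := rfl
        have e2 : p ((pl v : E)) = pl v := hpK _ (pl v).2
        have e3 : p ((k : E)) = k := hpK _ k.2
        simp [map_sub, map_add, e1, e2, e3]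
      simp [hΦ', ContinuousLinearMap.prod_apply, h1, h2, Prod.ext_iff]
  -- the continuous linear equivalence with underlying map `Φ'`
  set Φe : E ≃L[ℝ] F × K :=
    LinearEquiv.toContinuousLinearEquiv (LinearEquiv.ofBijective (Φ' : E →ₗ[ℝ] F × K) hbij)
    with hΦe
  have hΦecoe : ∀ x : E, Φe x = Φ' x := fun _ => rfl
  have hΦeCLM : (Φe : E →L[ℝ] F × K) = Φ' := ContinuousLinearMap.ext hΦecoe
  -- fderiv of Φ at points of s
  have hfdiff : ∀ x ∈ s, HasFDerivAt f (fderiv ℝ f x) x := by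
    intro x hx
    exact ((hf.differentiableOn (by simp)).differentiableAt
      (hso.mem_nhds hx)).hasFDerivAt
  have hΦderiv : ∀ x ∈ s, HasFDerivAt Φ ((fderiv ℝ f x).prod p) x := by
    intro x hx
    exact (hfdiff x hx).prodMk p.hasFDerivAt
  -- the open set where the derivative of Φ is invertible
  set Λ : (E →L[ℝ] F) → (E →L[ℝ] E) :=
    fun T => (Φe.symm : F × K →L[ℝ] E).comp (T.prod p) with hΛ
  have hΛcont : Continuous Λ := by
    have h1 : Continuous fun T : E →L[ℝ] F => T.prod p := by
      have : (fun T : E →L[ℝ] F => T.prod p)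
          = (ContinuousLinearMap.prodₗᵢ (F := F) (G := K) ℝ) ∘ (fun T => (T, p)) := rfl
      rw [this]
      exact (ContinuousLinearMap.prodₗᵢ ℝ).continuous.comp
        (continuous_id.prodMk continuous_const)
    exact ((ContinuousLinearMap.compL ℝ E (F × K) E
      (Φe.symm : F × K →L[ℝ] E)).continuous).comp h1
  set s₂ : Set E := s ∩ (fun x => Λ (fderiv ℝ f x)) ⁻¹' {u | IsUnit u} with hs₂
  have hs₂open : IsOpen s₂ := by
    apply ContinuousOn.isOpen_inter_preimage ?_ hso Units.isOpen
    exact hΛcont.comp_continuousOn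
      (hf.continuousOn_fderiv_of_isOpen hso (by exact_mod_cast le_top))
  have has₂ : a ∈ s₂ := by
    refine ⟨ha, ?_⟩
    have hunit : Λ f' = 1 := by
      ext x
      have h1 : f'.prod p x = Φe x := (hΦecoe x).symm
      show Φe.symm (f'.prod p x) = x
      rw [h1, Φe.symm_apply_apply]
    show IsUnit (Λ f')
    rw [hunit]
    exact isUnit_one
  -- equivalences at nearby points
  have hequiv : ∀ x ∈ s₂, ∃ e : E ≃L[ℝ] F × K, (e : E →L[ℝ] F × K) = (fderiv ℝ f x).prod p := by
    intro x hx
    obtain ⟨w, hw⟩ := hx.2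
    refine ⟨(ContinuousLinearEquiv.ofUnit w).trans Φe, ContinuousLinearMap.ext fun v => ?_⟩
    have : (w : E →L[ℝ] E) v = Φe.symm ((fderiv ℝ f x).prod p v) := by
      rw [hw]; rfl
    calc ((ContinuousLinearEquiv.ofUnit w).trans Φe : E →L[ℝ] F × K) v
        = Φe ((w : E →L[ℝ] E) v) := rfl
      _ = Φe (Φe.symm ((fderiv ℝ f x).prod p v)) := by rw [this]
      _ = (fderiv ℝ f x).prod p v := Φe.apply_symm_apply _
  -- strict derivative at a
  obtain ⟨ea, hea⟩ := hequiv a has₂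
  have hΦcd : ∀ x ∈ s, ContDiffAt ℝ (⊤ : ℕ∞) Φ x := by
    intro x hx
    exact (hf.contDiffAt (hso.mem_nhds hx)).prodMk p.contDiff.contDiffAt
  have hΦstrict : HasStrictFDerivAt Φ (ea : E →L[ℝ] F × K) a :=
    (hΦcd a ha).hasStrictFDerivAt' (by rw [hea]; exact hΦderiv a ha) (by simp)
  set Ψ : OpenPartialHomeomorph E (F × K) := hΦstrict.toOpenPartialHomeomorph Φ with hΨ
  have hΨcoe : (Ψ : E → F × K) = Φ := hΦstrict.toOpenPartialHomeomorph_coe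
  have haΨ : a ∈ Ψ.source := hΦstrict.mem_toOpenPartialHomeomorph_source
  have hΦaΨ : Φ a ∈ Ψ.target := hΦstrict.image_mem_toOpenPartialHomeomorph_target
  have hsymmΦa : Ψ.symm (Φ a) = a := by
    have := Ψ.left_inv haΨ
    rwa [hΨcoe] at this
  set O : Set (F × K) := Ψ.target ∩ Ψ.symm ⁻¹' (s₂ ∩ Ψ.source) with hO
  have hOopen : IsOpen O :=
    ContinuousOn.isOpen_inter_preimage Ψ.continuousOn_symm Ψ.open_target
      (hs₂open.inter Ψ.open_source)
  have hΦaO : Φ a ∈ O := ⟨hΦaΨ, by rw [mem_preimage, hsymmΦa]; exact ⟨has₂, haΨ⟩⟩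
  set T : Set F := (fun y => (y, p a)) ⁻¹' O with hT
  have hTopen : IsOpen T := hOopen.preimage (continuous_id.prodMk continuous_const)
  have hfaT : f a ∈ T := by
    have : ((f a, p a) : F × K) = Φ a := rfl
    simp only [hT, mem_preimage, this]
    exact hΦaO
  refine ⟨T, hTopen, hfaT, fun y => Ψ.symm (y, p a), ?_, ?_⟩
  · show Ψ.symm (f a, p a) = a
    have : ((f a, p a) : F × K) = Φ a := rfl
    rw [this, hsymmΦa]
  · intro y hy
    have hyO : ((y, p a) : F × K) ∈ O := hy
    set x := Ψ.symm (y, p a) with hx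
    have hxmem : x ∈ s₂ ∩ Ψ.source := hyO.2
    have hxs : x ∈ s := hxmem.1.1
    have hright : Ψ x = (y, p a) := Ψ.right_inv hyO.1
    have hΦx : Φ x = (y, p a) := by rw [← hΨcoe]; exact hright
    have hfx : f x = y := congrArg Prod.fst hΦx
    refine ⟨?_, hxs, hfx⟩
    -- smoothness of the inverse at y
    obtain ⟨ex, hex⟩ := hequiv x hxmem.1
    have hΦdx : HasFDerivAt Φ (ex : E →L[ℝ] F × K) x := by rw [hex]; exact hΦderiv x hxs
    have hΨdx : HasFDerivAt Ψ (ex : E →L[ℝ] F × K) x := by rw [hΨcoe]; exact hΦdx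
    have hΨcd : ContDiffAt ℝ (⊤ : ℕ∞) Ψ x := by rw [hΨcoe]; exact hΦcd x hxs
    have hsymm : ContDiffAt ℝ (⊤ : ℕ∞) Ψ.symm (y, p a) :=
      Ψ.contDiffAt_symm hyO.1 hΨdx hΨcd
    exact hsymm.comp y ((contDiff_id.prodMk contDiff_const).contDiffAt)

theorem contMDiff_of_dsmooth {dG dM : ℕ} {G M : Type}
    [TopologicalSpace G] [ChartedSpace (EuclideanSpace ℝ (Fin dG)) G]
    [IsManifold (𝓡 dG) (⊤ : ℕ∞) G]
    [TopologicalSpace M] [ChartedSpace (EuclideanSpace ℝ (Fin dM)) M]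
    [IsManifold (𝓡 dM) (⊤ : ℕ∞) M]
    {DG : DiffeologyStr G} (hDG : IsManifoldDiffeology (𝓡 dG) DG)
    {DM : DiffeologyStr M} (hDM : IsManifoldDiffeology (𝓡 dM) DM)
    {s : G → M} (hsm : DSmooth DG DM s) :
    ContMDiff (𝓡 dG) (𝓡 dM) (⊤ : ℕ∞) s := by
  intro g
  set c := extChartAt (𝓡 dG) g with hc
  set e : EuclideanSpace ℝ (Fin dG) ≃L[ℝ] (Fin dG → ℝ) := EuclideanSpace.equiv (Fin dG) ℝ
    with he
  set p : (Fin dG → ℝ) → G := fun z => c.symm (e.symm z) with hpdef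
  set U : Set (Fin dG → ℝ) := e.symm ⁻¹' c.target with hUdef
  have hUopen : IsOpen U := (isOpen_extChartAt_target g).preimage e.symm.continuous
  have hpcm : ContMDiffOn 𝓘(ℝ, Fin dG → ℝ) (𝓡 dG) (⊤ : ℕ∞) p U := by
    refine (contMDiffOn_extChartAt_symm (n := (⊤ : ℕ∞)) g).comp ?_ (fun z hz => hz)
    exact (e.symm.contDiff.contMDiff).contMDiffOn
  have hplot : DG.IsPlot U p := (hDG U p).2 ⟨hUopen, hpcm⟩
  have hcm : ContMDiffOn 𝓘(ℝ, Fin dG → ℝ) (𝓡 dM) (⊤ : ℕ∞) (s ∘ p) U := ((hDM U (s ∘ p)).1 (hsm hplot)).2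
  have hz₀ : e (c g) ∈ U := by
    show e.symm (e (c g)) ∈ c.target
    rw [e.symm_apply_apply]
    exact mem_extChartAt_target g
  have h1 : ContMDiffAt 𝓘(ℝ, Fin dG → ℝ) (𝓡 dM) (⊤ : ℕ∞) (s ∘ p) (e (c g)) :=
    hcm.contMDiffAt (hUopen.mem_nhds hz₀)
  have h2 : ContMDiffAt (𝓡 dG) 𝓘(ℝ, Fin dG → ℝ) (⊤ : ℕ∞) (fun x => e (c x)) g :=
    (e.contDiff.contMDiff.contMDiffAt).comp g (contMDiffAt_extChartAt (n := (⊤ : ℕ∞)))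
  have hF : ContMDiffAt (𝓡 dG) (𝓡 dM) (⊤ : ℕ∞) ((s ∘ p) ∘ fun x => e (c x)) g := h1.comp g h2
  refine hF.congr_of_eventuallyEq ?_
  refine Filter.eventuallyEq_of_mem
    ((isOpen_extChartAt_source g).mem_nhds (mem_extChartAt_source (I := 𝓡 dG) g)) ?_
  intro x hx
  show s x = s (c.symm (e.symm (e (c x))))
  rw [e.symm_apply_apply, c.left_inv hx]


/-- If `G ⇉ M` is a Lie groupoid and `X = M/G` its orbit space with the
quotient diffeology, the quotient map `π : M → X` is a local subduction. -/
theorem statement3 {dG dM : ℕ} {G M X : Type}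
    [TopologicalSpace G] [ChartedSpace (EuclideanSpace ℝ (Fin dG)) G]
    [IsManifold (𝓡 dG) (⊤ : ℕ∞) G]
    [TopologicalSpace M] [ChartedSpace (EuclideanSpace ℝ (Fin dM)) M]
    [IsManifold (𝓡 dM) (⊤ : ℕ∞) M]
    (DG : DiffeologyStr G) (hDG : IsManifoldDiffeology (𝓡 dG) DG)
    (DM : DiffeologyStr M) (hDM : IsManifoldDiffeology (𝓡 dM) DM)
    (𝒢 : DiffGroupoid DG DM)
    -- the source and target maps are submersions, so `𝒢` is a Lie groupoid
    (hs : ∀ g : G, Function.Surjective ⇑(mfderiv (𝓡 dG) (𝓡 dM) 𝒢.src g))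
    (ht : ∀ g : G, Function.Surjective ⇑(mfderiv (𝓡 dG) (𝓡 dM) 𝒢.tgt g))
    -- the orbit space `X = M/G` with the quotient diffeology
    (π : M → X) (hsurj : Function.Surjective π)
    (horb : ∀ p q : M, π p = π q ↔ ∃ g : G, 𝒢.src g = q ∧ 𝒢.tgt g = p)
    (DX : DiffeologyStr X) (hDX : IsQuotientDiffeology DM π DX) :
    IsLocalSubduction DM DX π := by
  constructor
  · -- π is smooth
    intro n U ψ hψ
    exact (hDX U (π ∘ ψ)).2 ⟨DM.isOpen_of_isPlot hψ,
      fun u hu => ⟨U, Set.Subset.rfl, DM.isOpen_of_isPlot hψ, hu, ψ, hψ, fun v _ => rfl⟩⟩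
  · -- local lifting through a prescribed point
    intro n U φ hφ u hu x hx
    obtain ⟨hUopen, hloc⟩ := (hDX U φ).1 hφ
    obtain ⟨V₀, hV₀U, hV₀open, huV₀, ψ₀, hψ₀plot, hψ₀eq⟩ := hloc u hu
    have hπeq : π x = π (ψ₀ u) := hx.trans (hψ₀eq huV₀).symm
    obtain ⟨g, hgs, hgt⟩ := (horb x (ψ₀ u)).1 hπeq
    -- smoothness of the source map
    have hsrcM : ContMDiff (𝓡 dG) (𝓡 dM) (⊤ : ℕ∞) 𝒢.src := contMDiff_of_dsmooth hDG hDM 𝒢.smooth_src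
    set c := extChartAt (𝓡 dG) g with hcdef
    set c' := extChartAt (𝓡 dM) (𝒢.src g) with hc'def
    set fsrc : EuclideanSpace ℝ (Fin dG) → EuclideanSpace ℝ (Fin dM) :=
      writtenInExtChartAt (𝓡 dG) (𝓡 dM) g 𝒢.src with hftdef
    -- the derivative of the source map in charts is surjective
    have hmd : MDifferentiableAt (𝓡 dG) (𝓡 dM) 𝒢.src g :=
      (hsrcM g).mdifferentiableAt (by simp)
    have hmf : mfderiv (𝓡 dG) (𝓡 dM) 𝒢.src g = fderiv ℝ fsrc (c g) := by
      rw [hmd.mfderiv, ModelWithCorners.range_eq_univ, fderivWithin_univ]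
    have hsurjf : Function.Surjective ⇑(fderiv ℝ fsrc (c g)) := by
      rw [← hmf]; exact hs g
    -- domain on which the chart representative is smooth
    set sdom : Set (EuclideanSpace ℝ (Fin dG)) :=
      c.target ∩ c.symm ⁻¹' (𝒢.src ⁻¹' c'.source) with hsdomdef
    have hsdom_open : IsOpen sdom :=
      ContinuousOn.isOpen_inter_preimage
        (contMDiffOn_extChartAt_symm (n := (⊤ : ℕ∞)) g).continuousOn
        (isOpen_extChartAt_target g)
        ((hsrcM.continuous).isOpen_preimage _ (isOpen_extChartAt_source _))
    have hcg_mem : c g ∈ sdom := by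
      refine ⟨mem_extChartAt_target g, ?_⟩
      show 𝒢.src (c.symm (c g)) ∈ c'.source
      rw [extChartAt_to_inv]
      exact mem_extChartAt_source _
    have hftcd : ContDiffOn ℝ (⊤ : ℕ∞) fsrc sdom := by
      rw [← contMDiffOn_iff_contDiffOn]
      have h1 : ContMDiffOn 𝓘(ℝ, EuclideanSpace ℝ (Fin dG)) (𝓡 dG) (⊤ : ℕ∞) c.symm sdom :=
        (contMDiffOn_extChartAt_symm g).mono Set.inter_subset_left
      have h2 := hsrcM.comp_contMDiffOn h1
      have h3 : ContMDiffOn (𝓡 dM) 𝓘(ℝ, EuclideanSpace ℝ (Fin dM)) (⊤ : ℕ∞) c' c'.source := by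
        rw [hc'def, extChartAt_source]
        exact contMDiffOn_extChartAt
      exact h3.comp h2 (fun y hy => hy.2)
    obtain ⟨T, hTopen, hfaT, h, hhfa, hhy⟩ :=
      exists_local_right_inverse hsdom_open hcg_mem hftcd hsurjf
    have hy₀ : fsrc (c g) = c' (𝒢.src g) := by
      show c' (𝒢.src (c.symm (c g))) = c' (𝒢.src g)
      rw [extChartAt_to_inv]
    -- the correcting section
    set σ : M → G := fun m => c.symm (h (c' m)) with hσdef
    set N : Set M := c'.source ∩ c' ⁻¹' T with hNdef
    have hNopen : IsOpen N := by
      refine ContinuousOn.isOpen_inter_preimage ?_ (isOpen_extChartAt_source _) hTopen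
      exact continuousOn_extChartAt _
    have hσ_src : ∀ m ∈ N, 𝒢.src (σ m) = m := by
      intro m hm
      obtain ⟨hcd, hins, hfeq⟩ := hhy (c' m) hm.2
      have h1 : 𝒢.src (σ m) ∈ c'.source := hins.2
      exact (extChartAt (𝓡 dM) (𝒢.src g)).injOn h1 hm.1 hfeq
    have hsrcgN : 𝒢.src g ∈ N := by
      refine ⟨mem_extChartAt_source _, ?_⟩
      show c' (𝒢.src g) ∈ T
      rw [← hy₀]
      exact hfaT
    have hσg : σ (𝒢.src g) = g := by
      show c.symm (h (c' (𝒢.src g))) = g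
      rw [← hy₀, hhfa, extChartAt_to_inv]
    -- the corrected lift
    have hψ₀cm : ContMDiffOn 𝓘(ℝ, Fin n → ℝ) (𝓡 dM) (⊤ : ℕ∞) ψ₀ V₀ := ((hDM V₀ ψ₀).1 hψ₀plot).2
    set V : Set (Fin n → ℝ) := V₀ ∩ ψ₀ ⁻¹' N with hVdef
    have hVopen : IsOpen V :=
      ContinuousOn.isOpen_inter_preimage hψ₀cm.continuousOn hV₀open hNopen
    have huV : u ∈ V := ⟨huV₀, by show ψ₀ u ∈ N; rw [← hgs]; exact hsrcgN⟩
    have hσψ : ContMDiffOn 𝓘(ℝ, Fin n → ℝ) (𝓡 dG) (⊤ : ℕ∞) (fun v => σ (ψ₀ v)) V := by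
      intro v hv
      have hψv : ContMDiffAt 𝓘(ℝ, Fin n → ℝ) (𝓡 dM) (⊤ : ℕ∞) ψ₀ v :=
        hψ₀cm.contMDiffAt (hV₀open.mem_nhds hv.1)
      obtain ⟨hcd, hins, hfeq⟩ := hhy (c' (ψ₀ v)) hv.2.2
      have hc'at : ContMDiffAt (𝓡 dM) 𝓘(ℝ, EuclideanSpace ℝ (Fin dM)) (⊤ : ℕ∞) c' (ψ₀ v) := by
        refine contMDiffAt_extChartAt' ?_
        rw [← extChartAt_source (𝓡 dM)]
        exact hv.2.1
      have hhat : ContMDiffAt 𝓘(ℝ, EuclideanSpace ℝ (Fin dM))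
          𝓘(ℝ, EuclideanSpace ℝ (Fin dG)) (⊤ : ℕ∞) h (c' (ψ₀ v)) := contMDiffAt_iff_contDiffAt.2 hcd
      have hcsat : ContMDiffAt 𝓘(ℝ, EuclideanSpace ℝ (Fin dG)) (𝓡 dG) (⊤ : ℕ∞) c.symm (h (c' (ψ₀ v))) :=
        (contMDiffOn_extChartAt_symm g).contMDiffAt
          ((isOpen_extChartAt_target g).mem_nhds hins.1)
      exact ((hcsat.comp v (hhat.comp v (hc'at.comp v hψv)))).contMDiffWithinAt
    have hplotG : DG.IsPlot V (fun v => σ (ψ₀ v)) := (hDG V _).2 ⟨hVopen, hσψ⟩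
    have hψplot : DM.IsPlot V (𝒢.tgt ∘ fun v => σ (ψ₀ v)) := 𝒢.smooth_tgt hplotG
    refine ⟨V, fun v hv => hV₀U hv.1, hVopen, huV,
      𝒢.tgt ∘ fun v => σ (ψ₀ v), hψplot, ?_, ?_⟩
    · show 𝒢.tgt (σ (ψ₀ u)) = x
      rw [← hgs, hσg]
      exact hgt
    · intro v hv
      show π (𝒢.tgt (σ (ψ₀ v))) = φ v
      have h1 : π (𝒢.tgt (σ (ψ₀ v))) = π (ψ₀ v) :=
        (horb _ _).2 ⟨σ (ψ₀ v), hσ_src _ hv.2, rfl⟩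
      rw [h1]
      exact hψ₀eq hv.1
end

section
/- Let X = ℝ/ℤ₂ be the quotient of ℝ by the reflection x ↦ -x, with the quotient diffeology. Then the fiber product ℝ ×_X ℝ = {(x,y) ∈ ℝ² : x = y or x = -y}, with the subset diffeology from ℝ², is not a quasi-étale diffeological space: there is no local subduction from a 1-dimensional manifold onto a neighborhood of (0,0) with totally disconnected fibers. -/
open Set Function
open scoped Manifold

variable {X Y Z : Type*}

/-- The underlying set of the fiber product `ℝ ×_{ℝ/ℤ₂} ℝ` of the quotient of `ℝ` by the
reflection `x ↦ -x` with itself. -/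
def crossSet : Set (ℝ × ℝ) := {v | v.1 = v.2 ∨ v.1 = -v.2}


/-! ## Auxiliary lemmas for Statement 10 -/

/-- Key lemma: there is no local subduction from a smooth manifold (of any dimension)
onto the cross whose image contains the origin. -/
theorem crossKey (DR2 : DiffeologyStr (ℝ × ℝ))
    (hDR2 : IsManifoldDiffeology 𝓘(ℝ, ℝ × ℝ) DR2)
    {M : Type} {DM : DiffeologyStr M} {π : M → crossSet}
    (w : ManifoldDiffeologyWitness M DM)
    (hsub : IsLocalSubduction DM (DR2.subset crossSet) π)
    (hmem : (⟨(0, 0), Or.inl rfl⟩ : crossSet) ∈ Set.range π) : False := by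
  classical
  obtain ⟨m₀, hm₀⟩ := hmem
  letI := w.tM; letI := w.cM; letI := w.smooth
  have hdiff : IsManifoldDiffeology (𝓡 w.d) DM := w.isDiffeology
  -- the two branch plots
  have hφ₁ : (DR2.subset crossSet).IsPlot (univ : Set (Fin 1 → ℝ))
      (fun u => (⟨(u 0, u 0), Or.inl rfl⟩ : crossSet)) := by
    show DR2.IsPlot univ (fun u : Fin 1 → ℝ => ((u 0, u 0) : ℝ × ℝ))
    rw [hDR2]
    refine ⟨isOpen_univ, (ContDiff.contMDiff ?_).contMDiffOn⟩
    exact ((ContinuousLinearMap.proj 0 : (Fin 1 → ℝ) →L[ℝ] ℝ).prod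
      (ContinuousLinearMap.proj 0)).contDiff
  have hφ₂ : (DR2.subset crossSet).IsPlot (univ : Set (Fin 1 → ℝ))
      (fun u => (⟨(u 0, -u 0), Or.inr (neg_neg (u 0)).symm⟩ : crossSet)) := by
    show DR2.IsPlot univ (fun u : Fin 1 → ℝ => ((u 0, -u 0) : ℝ × ℝ))
    rw [hDR2]
    refine ⟨isOpen_univ, (ContDiff.contMDiff ?_).contMDiffOn⟩
    exact ((ContinuousLinearMap.proj 0 : (Fin 1 → ℝ) →L[ℝ] ℝ).prod
      (-ContinuousLinearMap.proj 0)).contDiff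
  -- lift both plots through m₀
  obtain ⟨V₁, -, hV₁o, hV₁0, ψ₁, hψ₁p, hψ₁0, hψ₁e⟩ :=
    hsub.2 hφ₁ 0 (mem_univ _) m₀ (by rw [hm₀]; exact Subtype.ext (by simp))
  obtain ⟨V₂, -, hV₂o, hV₂0, ψ₂, hψ₂p, hψ₂0, hψ₂e⟩ :=
    hsub.2 hφ₂ 0 (mem_univ _) m₀ (by rw [hm₀]; exact Subtype.ext (by norm_num))
  have hψ₁s : ContMDiffOn 𝓘(ℝ, Fin 1 → ℝ) (𝓡 w.d) (⊤ : ℕ∞) ψ₁ V₁ := ((hdiff _ _).mp hψ₁p).2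
  have hψ₂s : ContMDiffOn 𝓘(ℝ, Fin 1 → ℝ) (𝓡 w.d) (⊤ : ℕ∞) ψ₂ V₂ := ((hdiff _ _).mp hψ₂p).2
  -- chart around m₀ and the local form of π
  set e := chartAt (EuclideanSpace ℝ (Fin w.d)) m₀ with he
  set toEuc : (Fin w.d → ℝ) ≃L[ℝ] EuclideanSpace ℝ (Fin w.d) :=
    (EuclideanSpace.equiv (Fin w.d) ℝ).symm with htoEuc
  set ρ : (Fin w.d → ℝ) → M := fun x => e.symm (toEuc x) with hρ
  set W : Set (Fin w.d → ℝ) := (fun x => toEuc x) ⁻¹' e.target with hW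
  have hWopen : IsOpen W := e.open_target.preimage toEuc.continuous
  have hρs : ContMDiffOn 𝓘(ℝ, Fin w.d → ℝ) (𝓡 w.d) (⊤ : ℕ∞) ρ W :=
    (contMDiffOn_chart_symm (x := m₀)).comp
      (toEuc.contDiff.contMDiff.contMDiffOn) (fun x hx => hx)
  have hρplot : DM.IsPlot W ρ := (hdiff W ρ).mpr ⟨hWopen, hρs⟩
  set g : (Fin w.d → ℝ) → ℝ × ℝ := fun x => ((π (ρ x) : crossSet) : ℝ × ℝ) with hg
  have hgplot : DR2.IsPlot W g := hsub.1 hρplot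
  have hgs : ContDiffOn ℝ ((⊤ : ℕ∞) : WithTop ℕ∞) g W := ((hDR2 W g).mp hgplot).2.contDiffOn
  set x₀ : Fin w.d → ℝ := toEuc.symm (e m₀) with hx₀
  have hx₀W : x₀ ∈ W := by
    show toEuc (toEuc.symm (e m₀)) ∈ e.target
    rw [toEuc.apply_symm_apply]
    exact mem_chart_target _ m₀
  -- the two lifted curves in chart coordinates
  set η₁ : (Fin 1 → ℝ) → (Fin w.d → ℝ) := fun u => toEuc.symm (e (ψ₁ u)) with hη₁
  set η₂ : (Fin 1 → ℝ) → (Fin w.d → ℝ) := fun u => toEuc.symm (e (ψ₂ u)) with hη₂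
  set S₁ : Set (Fin 1 → ℝ) := V₁ ∩ ψ₁ ⁻¹' e.source with hS₁
  set S₂ : Set (Fin 1 → ℝ) := V₂ ∩ ψ₂ ⁻¹' e.source with hS₂
  have hS₁open : IsOpen S₁ :=
    hψ₁s.continuousOn.isOpen_inter_preimage hV₁o e.open_source
  have hS₂open : IsOpen S₂ :=
    hψ₂s.continuousOn.isOpen_inter_preimage hV₂o e.open_source
  have h0S₁ : (0 : Fin 1 → ℝ) ∈ S₁ := ⟨hV₁0, by
    show ψ₁ 0 ∈ e.source; rw [hψ₁0]; exact mem_chart_source _ m₀⟩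
  have h0S₂ : (0 : Fin 1 → ℝ) ∈ S₂ := ⟨hV₂0, by
    show ψ₂ 0 ∈ e.source; rw [hψ₂0]; exact mem_chart_source _ m₀⟩
  have hη₁s : ContDiffOn ℝ ((⊤ : ℕ∞) : WithTop ℕ∞) η₁ S₁ :=
    ((toEuc.symm.contDiff.contMDiff).comp_contMDiffOn
      ((contMDiffOn_chart (x := m₀)).comp (hψ₁s.mono inter_subset_left)
        (fun u hu => hu.2))).contDiffOn
  have hη₂s : ContDiffOn ℝ ((⊤ : ℕ∞) : WithTop ℕ∞) η₂ S₂ :=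
    ((toEuc.symm.contDiff.contMDiff).comp_contMDiffOn
      ((contMDiffOn_chart (x := m₀)).comp (hψ₂s.mono inter_subset_left)
        (fun u hu => hu.2))).contDiffOn
  have hη₁0 : η₁ 0 = x₀ := by show toEuc.symm (e (ψ₁ 0)) = _; rw [hψ₁0]
  have hη₂0 : η₂ 0 = x₀ := by show toEuc.symm (e (ψ₂ 0)) = _; rw [hψ₂0]
  -- the composition with g gives the two branches
  have key₁ : ∀ u ∈ S₁, g (η₁ u) = (u 0, u 0) := by
    intro u hu
    show ((π (e.symm (toEuc (toEuc.symm (e (ψ₁ u))))) : crossSet) : ℝ × ℝ) = _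
    rw [toEuc.apply_symm_apply, e.left_inv hu.2]
    exact congrArg Subtype.val (hψ₁e hu.1)
  have key₂ : ∀ u ∈ S₂, g (η₂ u) = (u 0, -u 0) := by
    intro u hu
    show ((π (e.symm (toEuc (toEuc.symm (e (ψ₂ u))))) : crossSet) : ℝ × ℝ) = _
    rw [toEuc.apply_symm_apply, e.left_inv hu.2]
    exact congrArg Subtype.val (hψ₂e hu.1)
  -- differentiability
  have hgat : ContDiffAt ℝ ((⊤ : ℕ∞) : WithTop ℕ∞) g x₀ := hgs.contDiffAt (hWopen.mem_nhds hx₀W)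
  have hgd : DifferentiableAt ℝ g x₀ := hgat.differentiableAt (by simp)
  have hgstrict : HasStrictFDerivAt g (fderiv ℝ g x₀) x₀ :=
    hgat.hasStrictFDerivAt (by simp)
  have hη₁d : DifferentiableAt ℝ η₁ 0 :=
    (hη₁s.contDiffAt (hS₁open.mem_nhds h0S₁)).differentiableAt (by simp)
  have hη₂d : DifferentiableAt ℝ η₂ 0 :=
    (hη₂s.contDiffAt (hS₂open.mem_nhds h0S₂)).differentiableAt (by simp)
  set δ : Fin 1 → ℝ := fun _ => 1 with hδ
  set L₁ : (Fin 1 → ℝ) →L[ℝ] ℝ × ℝ :=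
    (ContinuousLinearMap.proj 0).prod (ContinuousLinearMap.proj 0) with hL₁
  set L₂ : (Fin 1 → ℝ) →L[ℝ] ℝ × ℝ :=
    (ContinuousLinearMap.proj 0).prod (-ContinuousLinearMap.proj 0) with hL₂
  have hev₁ : (g ∘ η₁) =ᶠ[nhds (0 : Fin 1 → ℝ)] (fun u => ((u 0, u 0) : ℝ × ℝ)) := by
    filter_upwards [hS₁open.mem_nhds h0S₁] with u hu using key₁ u hu
  have hev₂ : (g ∘ η₂) =ᶠ[nhds (0 : Fin 1 → ℝ)] (fun u => ((u 0, -u 0) : ℝ × ℝ)) := by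
    filter_upwards [hS₂open.mem_nhds h0S₂] with u hu using key₂ u hu
  have hcomp₁ : fderiv ℝ (g ∘ η₁) 0 = (fderiv ℝ g x₀).comp (fderiv ℝ η₁ 0) := by
    have h := fderiv_comp (𝕜 := ℝ) (x := (0 : Fin 1 → ℝ)) (g := g) (f := η₁)
      (by rwa [hη₁0]) hη₁d
    rwa [hη₁0] at h
  have hcomp₂ : fderiv ℝ (g ∘ η₂) 0 = (fderiv ℝ g x₀).comp (fderiv ℝ η₂ 0) := by
    have h := fderiv_comp (𝕜 := ℝ) (x := (0 : Fin 1 → ℝ)) (g := g) (f := η₂)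
      (by rwa [hη₂0]) hη₂d
    rwa [hη₂0] at h
  have hfd₁ : fderiv ℝ (g ∘ η₁) 0 = L₁ := by
    rw [hev₁.fderiv_eq]; exact L₁.fderiv
  have hfd₂ : fderiv ℝ (g ∘ η₂) 0 = L₂ := by
    rw [hev₂.fderiv_eq]; exact L₂.fderiv
  set A := fderiv ℝ g x₀ with hA
  set v₁ := (fderiv ℝ η₁ 0) δ with hv₁
  set v₂ := (fderiv ℝ η₂ 0) δ with hv₂
  have hA₁ : A v₁ = (1, 1) :=
    congrArg (fun (T : (Fin 1 → ℝ) →L[ℝ] ℝ × ℝ) => T δ) (hcomp₁.symm.trans hfd₁)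
  have hA₂ : A v₂ = (1, -1) :=
    congrArg (fun (T : (Fin 1 → ℝ) →L[ℝ] ℝ × ℝ) => T δ) (hcomp₂.symm.trans hfd₂)
  have hsurj : LinearMap.range (A : (Fin w.d → ℝ) →ₗ[ℝ] ℝ × ℝ) = ⊤ := by
    rw [LinearMap.range_eq_top]
    intro y
    refine ⟨((y.1 + y.2) / 2) • v₁ + ((y.1 - y.2) / 2) • v₂, ?_⟩
    rw [map_add, map_smul, map_smul, ContinuousLinearMap.coe_coe, hA₁, hA₂]
    ext <;> simp <;> ring
  have hgx₀ : g x₀ = (0, 0) := by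
    show ((π (e.symm (toEuc (toEuc.symm (e m₀)))) : crossSet) : ℝ × ℝ) = _
    rw [toEuc.apply_symm_apply, e.left_inv (mem_chart_source _ m₀), hm₀]
  -- g is open at x₀, but its image lies in the cross
  have hmap : Filter.map g (nhds x₀) = nhds (g x₀) :=
    hgstrict.map_nhds_eq_of_surj hsurj
  have hcross : crossSet ∈ nhds ((0, 0) : ℝ × ℝ) := by
    rw [← hgx₀, ← hmap]
    exact Filter.mem_map.mpr (Filter.univ_mem' (fun x => (π (ρ x)).2))
  obtain ⟨ε, hε, hball⟩ := Metric.mem_nhds_iff.mp hcross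
  have hpt : ((ε / 2, 0) : ℝ × ℝ) ∈ Metric.ball ((0, 0) : ℝ × ℝ) ε := by
    have hdist : dist ((ε / 2, 0) : ℝ × ℝ) ((0, 0) : ℝ × ℝ) = ε / 2 := by
      rw [Prod.dist_eq]
      simp [Real.dist_eq, abs_of_pos hε, max_eq_left (half_pos hε).le]
    rw [Metric.mem_ball, hdist]
    linarith
  have hc := hball hpt
  rcases hc with h | h <;> simp only [crossSet, Set.mem_setOf_eq] at h <;> linarith

/-- The fiber product `ℝ ×_{ℝ/ℤ₂} ℝ = {(x,y) : x = y or x = -y}`, with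
the subset diffeology from `ℝ²`, is not a quasi-étale diffeological space; in particular
there is no local subduction with totally disconnected fibers from a 1-dimensional
manifold to it whose image contains `(0,0)`. -/
theorem statement10 (DR2 : DiffeologyStr (ℝ × ℝ))
    (hDR2 : IsManifoldDiffeology 𝓘(ℝ, ℝ × ℝ) DR2) :
    ¬ IsQuasiEtaleSpace (DR2.subset crossSet) ∧
    ¬ ∃ (M : Type) (DM : DiffeologyStr M) (π : M → crossSet),
        (∃ w : ManifoldDiffeologyWitness M DM, w.d = 1) ∧
        IsLocalSubduction DM (DR2.subset crossSet) π ∧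
        (∀ z : crossSet, TotallyDisconnectedIn DM (π ⁻¹' {z})) ∧
        (⟨(0, 0), Or.inl rfl⟩ : crossSet) ∈ Set.range π := by
  constructor
  · intro h
    obtain ⟨Mm, DM, π, ⟨w⟩, hqe, hrange⟩ := h ⟨(0, 0), Or.inl rfl⟩
    exact crossKey DR2 hDR2 w hqe.1 hrange
  · rintro ⟨Mm, DM, π, ⟨w, -⟩, hls, -, hrange⟩
    exact crossKey DR2 hDR2 w hls hrange
end
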